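/- arXiv:1301.5263 — 2 statements merged into one kernel-verified Lean document; each statement's English description precedes it below -/
import Mathlib

section
/- Let s be a Sturmian word with a factorization s = U_1 U_2 ⋯ where each U_i is a non-empty prefix of s. Then there exist indices i, j such that U_i and U_j are rich in different letters, i.e., r_s(U_i) ≠ r_s(U_j). -/
/-- Letters: `false` plays the role of `a`, `true` the role of `b`.
A finite word `u` is a factor of the infinite word `s`. -/
def FactorOf (s : ℕ → Bool) (u : List Bool) : Prop :=
  ∃ i : ℕ, u = (List.range u.length).map fun k => s (i + k)

/-- `u` is a (finite) prefix of the infinite word `s`. -/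
def PrefixOf (s : ℕ → Bool) (u : List Bool) : Prop :=
  u = (List.range u.length).map s

def EventuallyPeriodic (s : ℕ → Bool) : Prop :=
  ∃ p > 0, ∃ N, ∀ n ≥ N, s (n + p) = s n

/-- `s` is balanced: counts of each letter in equal-length factors differ by at most 1. -/
def BalancedW (s : ℕ → Bool) : Prop :=
  ∀ u v, FactorOf s u → FactorOf s v → u.length = v.length →
    ∀ x : Bool, |(u.count x : ℤ) - (v.count x : ℤ)| ≤ 1

/-- A Sturmian word: aperiodic and balanced. -/
def Sturmian (s : ℕ → Bool) : Prop :=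
  ¬ EventuallyPeriodic s ∧ BalancedW s

/-- `u` is rich in the letter `x` (with respect to `s`). -/
def RichIn (s : ℕ → Bool) (u : List Bool) (x : Bool) : Prop :=
  ∃ v, FactorOf s v ∧ v.length = u.length ∧ v.count x < u.count x

/-- `s = U 0 ++ U 1 ++ ⋯` with all the `U i` non-empty. -/
def Factorization (s : ℕ → Bool) (U : ℕ → List Bool) : Prop :=
  (∀ i, U i ≠ []) ∧ ∀ n, PrefixOf s (((List.range n).map U).flatten)

/-- The morphism `R : a ↦ a, b ↦ ba`. -/
def Rmor : Bool → List Bool := fun x => if x then [true, false] else [false]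

/-- The morphism `L : a ↦ a, b ↦ ab`. -/
def Lmor : Bool → List Bool := fun x => if x then [false, true] else [false]

/-- `s` is the image of the infinite word `t` under the substitution `m`. -/
def SubstEq (m : Bool → List Bool) (t s : ℕ → Bool) : Prop :=
  ∀ n, PrefixOf s (((List.range n).map fun i => m (t i)).flatten)

namespace S16
variable (s : ℕ → Bool)

def W (i n : ℕ) : List Bool := (List.range n).map fun k => s (i + k)

def cnt (x : Bool) (i n : ℕ) : ℕ := (W s i n).count x

noncomputable def mw (x : Bool) (n : ℕ) : ℕ := sInf {c | ∃ i, cnt s x i n = c}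

lemma length_W (i n : ℕ) : (W s i n).length = n := by simp [W]

lemma factorOf_W (i n : ℕ) : FactorOf s (W s i n) := ⟨i, by rw [length_W]; rfl⟩

lemma W_zero_eq (n : ℕ) : W s 0 n = (List.range n).map s := by
  simp [W]

lemma W_add (i p q : ℕ) : W s i (p + q) = W s i p ++ W s (i + p) q := by
  simp [W, List.range_add, List.map_map, Function.comp, Nat.add_assoc]

lemma W_take {t n : ℕ} (h : t ≤ n) (i : ℕ) : (W s i n).take t = W s i t := by
  simp [W, ← List.map_take, List.take_range, Nat.min_eq_left h]

lemma cnt_add (x : Bool) (i p q : ℕ) :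
    cnt s x i (p + q) = cnt s x i p + cnt s x (i + p) q := by
  rw [cnt, W_add, List.count_append]; rfl

lemma cnt_zero (x : Bool) (i : ℕ) : cnt s x i 0 = 0 := by simp [cnt, W]

lemma cnt_one (x : Bool) (i : ℕ) : cnt s x i 1 = if s i = x then 1 else 0 := by
  by_cases h : s i = x <;>
    simp [cnt, W, List.range_succ, List.count_cons, List.count_nil, h]

lemma cnt_succ (x : Bool) (i n : ℕ) :
    cnt s x i (n + 1) = cnt s x i n + (if s (i + n) = x then 1 else 0) := by
  rw [cnt_add, cnt_one]

lemma cnt_succ_left (x : Bool) (i n : ℕ) :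
    cnt s x i (n + 1) = (if s i = x then 1 else 0) + cnt s x (i + 1) n := by
  rw [show n + 1 = 1 + n from by omega, cnt_add, cnt_one]

lemma cnt_total (i n : ℕ) : cnt s true i n + cnt s false i n = n := by
  induction n with
  | zero => simp [cnt_zero]
  | succ n ih =>
    rw [cnt_succ, cnt_succ]
    cases h : s (i + n) <;> simp [h] <;> omega

lemma mw_le (x : Bool) (i n : ℕ) : mw s x n ≤ cnt s x i n :=
  Nat.sInf_le ⟨i, rfl⟩

lemma exists_mw (x : Bool) (n : ℕ) : ∃ i, cnt s x i n = mw s x n := by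
  have h : (cnt s x 0 n) ∈ {c | ∃ i, cnt s x i n = c} := ⟨0, rfl⟩
  exact Nat.sInf_mem ⟨_, h⟩

lemma mw_zero (x : Bool) : mw s x 0 = 0 := by
  have := mw_le s x 0 0
  simpa [cnt_zero] using this

variable {s}

lemma cnt_le (hb : BalancedW s) (x : Bool) (i n : ℕ) : cnt s x i n ≤ mw s x n + 1 := by
  obtain ⟨j, hj⟩ := exists_mw s x n
  have h := hb (W s i n) (W s j n) (factorOf_W s i n) (factorOf_W s j n)
    (by rw [length_W, length_W]) x
  rw [abs_le] at h
  have h1 := h.2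
  rw [← hj]
  have : (cnt s x i n : ℤ) ≤ (cnt s x j n : ℤ) + 1 := by
    simpa [cnt] using by linarith [h1]
  exact_mod_cast this

lemma mw_super (x : Bool) (p q : ℕ) : mw s x p + mw s x q ≤ mw s x (p + q) := by
  obtain ⟨i, hi⟩ := exists_mw s x (p + q)
  rw [← hi, cnt_add]
  exact Nat.add_le_add (mw_le s x i p) (mw_le s x (i + p) q)

lemma mw_sub (hb : BalancedW s) (x : Bool) (p q : ℕ) :
    mw s x (p + q) ≤ mw s x p + mw s x q + 1 := by
  obtain ⟨i, hi⟩ := exists_mw s x p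
  calc mw s x (p + q) ≤ cnt s x i (p + q) := mw_le s x i (p + q)
    _ = cnt s x i p + cnt s x (i + p) q := cnt_add s x i p q
    _ ≤ mw s x p + (mw s x q + 1) := by
        rw [hi]; exact Nat.add_le_add_left (cnt_le hb x (i + p) q) _

lemma mw_iter_lo (x : Bool) (k n : ℕ) : k * mw s x n ≤ mw s x (k * n) := by
  induction k with
  | zero => simp [mw_zero]
  | succ k ih =>
    have := mw_super (s := s) x (k * n) n
    calc (k + 1) * mw s x n = k * mw s x n + mw s x n := by ring
      _ ≤ mw s x (k * n) + mw s x n := by omega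
      _ ≤ mw s x (k * n + n) := this
      _ = mw s x ((k + 1) * n) := by ring_nf

lemma mw_iter_hi (hb : BalancedW s) (x : Bool) (k n : ℕ) (hk : 0 < k) :
    mw s x (k * n) ≤ k * mw s x n + (k - 1) := by
  induction k with
  | zero => omega
  | succ k ih =>
    rcases Nat.eq_zero_or_pos k with h | h
    · subst h; simp
    · have h1 := ih h
      have h2 := mw_sub hb x (k * n) n
      have h3 : (k + 1) * mw s x n = k * mw s x n + mw s x n := by ring
      have h4 : (k + 1) * n = k * n + n := by ring
      rw [h4]
      omega

lemma mw_cross (hb : BalancedW s) (x : Bool) {n k : ℕ} (hn : 0 < n) (hk : 0 < k) :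
    k * mw s x n < n * (mw s x k + 1) := by
  have h1 := mw_iter_lo (s := s) x k n
  have h2 := mw_iter_hi hb x n k hn
  rw [mul_comm k n] at h1
  have h3 : n * (mw s x k + 1) = n * mw s x k + n := by ring
  omega


noncomputable def al (s : ℕ → Bool) (x : Bool) : ℝ :=
  sSup (Set.range fun n : ℕ => (mw s x (n + 1) : ℝ) / (n + 1))

lemma al_bdd (hb : BalancedW s) (x : Bool) :
    BddAbove (Set.range fun n : ℕ => (mw s x (n + 1) : ℝ) / (n + 1)) := by
  refine ⟨(mw s x 1 : ℝ) + 1, ?_⟩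
  rintro r ⟨n, rfl⟩
  have h := mw_cross hb x (n := n + 1) (k := 1) (by omega) (by omega)
  rw [div_le_iff₀ (by positivity)]
  have h' : (1 * mw s x (n + 1) : ℝ) < (n + 1) * (mw s x 1 + 1) := by exact_mod_cast h
  push_cast
  nlinarith [h']

lemma mw_le_al (hb : BalancedW s) (x : Bool) (n : ℕ) :
    (mw s x n : ℝ) ≤ n * al s x := by
  rcases Nat.eq_zero_or_pos n with h | h
  · subst h; simp [mw_zero]
  · obtain ⟨m, rfl⟩ : ∃ m, n = m + 1 := ⟨n - 1, by omega⟩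
    have hle : (mw s x (m + 1) : ℝ) / (m + 1) ≤ al s x :=
      le_csSup (al_bdd hb x) ⟨m, rfl⟩
    rw [div_le_iff₀ (by positivity)] at hle
    calc (mw s x (m + 1) : ℝ) ≤ al s x * (m + 1) := hle
      _ = (m + 1 : ℕ) * al s x := by push_cast; ring

lemma al_le_mw (hb : BalancedW s) (x : Bool) (n : ℕ) :
    (n : ℝ) * al s x ≤ mw s x n + 1 := by
  rcases Nat.eq_zero_or_pos n with h | h
  · subst h; simp; positivity
  · have hub : al s x ≤ (mw s x n + 1 : ℝ) / n := by
      apply csSup_le (Set.range_nonempty _)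
      rintro r ⟨j, rfl⟩
      rw [div_le_div_iff₀ (by positivity) (by exact_mod_cast h)]
      have hc := mw_cross hb x (n := j + 1) (k := n) (by omega) h
      have : ((n : ℝ)) * mw s x (j + 1) < (j + 1) * (mw s x n + 1) := by exact_mod_cast hc
      push_cast
      nlinarith [this]
    calc (n : ℝ) * al s x ≤ n * ((mw s x n + 1) / n) := by
          apply mul_le_mul_of_nonneg_left hub (by positivity)
      _ = mw s x n + 1 := by field_simp


lemma periodic_of_const {x : Bool} {n c N : ℕ} (hn : 0 < n)
    (h : ∀ j, N ≤ j → cnt s x j n = c) : EventuallyPeriodic s := by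
  refine ⟨n, hn, N, ?_⟩
  intro j hj
  have h1 : cnt s x j (n + 1) = cnt s x j n + (if s (j + n) = x then 1 else 0) :=
    cnt_succ s x j n
  have h2 : cnt s x j (n + 1) = (if s j = x then 1 else 0) + cnt s x (j + 1) n :=
    cnt_succ_left s x j n
  have e1 := h j hj
  have e2 := h (j + 1) (by omega)
  cases x <;> cases hx : s j <;> cases hy : s (j + n) <;> simp_all <;> omega

/-- the function g j = cnt x 0 j - j * al -/
noncomputable def gf (s : ℕ → Bool) (x : Bool) (j : ℕ) : ℝ :=
  (cnt s x 0 j : ℝ) - j * al s x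

lemma gf_bounds (hb : BalancedW s) (x : Bool) (j : ℕ) :
    -1 ≤ gf s x j ∧ gf s x j ≤ 1 := by
  have h1 := mw_le s x 0 j
  have h2 := cnt_le hb x 0 j
  have h3 := mw_le_al hb x j
  have h4 := al_le_mw hb x j
  unfold gf
  constructor
  · have : (cnt s x 0 j : ℝ) ≥ mw s x j := by exact_mod_cast h1
    nlinarith
  · have : (cnt s x 0 j : ℝ) ≤ mw s x j + 1 := by exact_mod_cast h2
    nlinarith

lemma gf_step (x : Bool) (j n : ℕ) :
    gf s x (j + n) = gf s x j + ((cnt s x j n : ℝ) - n * al s x) := by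
  unfold gf
  rw [cnt_add]
  push_cast
  ring

lemma al_strict_ub (hb : BalancedW s) (hap : ¬ EventuallyPeriodic s) (x : Bool)
    {n : ℕ} (hn : 0 < n) : (n : ℝ) * al s x < mw s x n + 1 := by
  rcases lt_or_eq_of_le (al_le_mw hb x n) with h | heq
  · exact h
  exfalso
  -- every window count is mw or mw+1; steps of gf along period n are -1 or 0
  have hcnt : ∀ j, cnt s x j n = mw s x n ∨ cnt s x j n = mw s x n + 1 := by
    intro j
    have := mw_le s x j n
    have := cnt_le hb x j n
    omega
  have hstep : ∀ j, gf s x (j + n) = gf s x j + ((cnt s x j n : ℝ) - (mw s x n + 1)) := by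
    intro j
    rw [gf_step, heq]
  have hmono : ∀ i a b, a ≤ b → gf s x (i + b * n) ≤ gf s x (i + a * n) := by
    intro i a b hab
    obtain ⟨d, rfl⟩ := Nat.exists_eq_add_of_le hab
    induction d with
    | zero => simp
    | succ d ih =>
      have : i + (a + (d + 1)) * n = (i + (a + d) * n) + n := by ring
      rw [this, hstep]
      rcases hcnt (i + (a + d) * n) with h' | h' <;> rw [h'] <;> push_cast <;> nlinarith [ih (by omega)]
  have hdrop : ∀ j, cnt s x j n = mw s x n → gf s x (j + n) ≤ gf s x j - 1 := by
    intro j h'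
    rw [hstep, h']
    push_cast; ring_nf; linarith
  -- for each residue i, eventually cnt = mw + 1
  have hev : ∀ i, ∃ K, ∀ k, K ≤ k → cnt s x (i + k * n) n = mw s x n + 1 := by
    intro i
    by_contra hcon
    push_neg at hcon
    have hbad : ∀ K, ∃ k, K ≤ k ∧ cnt s x (i + k * n) n = mw s x n := by
      intro K
      obtain ⟨k, hk, hne⟩ := hcon K
      exact ⟨k, hk, (hcnt _).resolve_right hne⟩
    obtain ⟨k1, _, hk1⟩ := hbad 0
    obtain ⟨k2, hk2ge, hk2⟩ := hbad (k1 + 1)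
    obtain ⟨k3, hk3ge, hk3⟩ := hbad (k2 + 1)
    have d1 : gf s x (i + (k1 + 1) * n) ≤ gf s x (i + k1 * n) - 1 := by
      have := hdrop (i + k1 * n) hk1
      calc gf s x (i + (k1 + 1) * n) = gf s x ((i + k1 * n) + n) := by ring_nf
        _ ≤ gf s x (i + k1 * n) - 1 := this
    have d2 : gf s x (i + (k2 + 1) * n) ≤ gf s x (i + k2 * n) - 1 := by
      have := hdrop (i + k2 * n) hk2
      calc gf s x (i + (k2 + 1) * n) = gf s x ((i + k2 * n) + n) := by ring_nf
        _ ≤ gf s x (i + k2 * n) - 1 := this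
    have d3 : gf s x (i + (k3 + 1) * n) ≤ gf s x (i + k3 * n) - 1 := by
      have := hdrop (i + k3 * n) hk3
      calc gf s x (i + (k3 + 1) * n) = gf s x ((i + k3 * n) + n) := by ring_nf
        _ ≤ gf s x (i + k3 * n) - 1 := this
    have m1 := hmono i (k1 + 1) k2 hk2ge
    have m2 := hmono i (k2 + 1) k3 hk3ge
    have m0 := hmono i 0 k1 (Nat.zero_le _)
    have b1 := (gf_bounds hb x (i + (k3 + 1) * n)).1
    have b2 := (gf_bounds hb x (i + 0 * n)).2
    linarith
  choose K hK using hev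
  set B := (Finset.range n).sup K with hB
  apply hap
  apply periodic_of_const (s := s) (x := x) (n := n) (c := mw s x n + 1)
    (N := n * (B + 1)) hn
  intro j hj
  have hjeq : j = j % n + (j / n) * n := by
    rw [mul_comm]
    exact (Nat.mod_add_div j n).symm
  have hmod : j % n < n := Nat.mod_lt _ hn
  have hdiv : B + 1 ≤ j / n := by
    have : n * (B + 1) / n ≤ j / n := Nat.div_le_div_right hj
    rwa [Nat.mul_div_cancel_left _ hn] at this
  have hKle : K (j % n) ≤ B := Finset.le_sup (Finset.mem_range.mpr hmod)
  rw [hjeq]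
  exact hK (j % n) (j / n) (by omega)


lemma al_strict_lb (hb : BalancedW s) (hap : ¬ EventuallyPeriodic s) (x : Bool)
    {n : ℕ} (hn : 0 < n) : (mw s x n : ℝ) < n * al s x := by
  rcases lt_or_eq_of_le (mw_le_al hb x n) with h | heq
  · exact h
  exfalso
  have hcnt : ∀ j, cnt s x j n = mw s x n ∨ cnt s x j n = mw s x n + 1 := by
    intro j
    have := mw_le s x j n
    have := cnt_le hb x j n
    omega
  have hstep : ∀ j, gf s x (j + n) = gf s x j + ((cnt s x j n : ℝ) - mw s x n) := by
    intro j
    rw [gf_step, ← heq]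
  have hmono : ∀ i a b, a ≤ b → gf s x (i + a * n) ≤ gf s x (i + b * n) := by
    intro i a b hab
    obtain ⟨d, rfl⟩ := Nat.exists_eq_add_of_le hab
    induction d with
    | zero => simp
    | succ d ih =>
      have he : i + (a + (d + 1)) * n = (i + (a + d) * n) + n := by ring
      rw [he, hstep]
      rcases hcnt (i + (a + d) * n) with h' | h' <;> rw [h'] <;> push_cast <;>
        nlinarith [ih (by omega)]
  have hdrop : ∀ j, cnt s x j n = mw s x n + 1 → gf s x j + 1 ≤ gf s x (j + n) := by
    intro j h'
    rw [hstep, h']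
    push_cast; ring_nf; linarith
  have hev : ∀ i, ∃ K, ∀ k, K ≤ k → cnt s x (i + k * n) n = mw s x n := by
    intro i
    by_contra hcon
    push_neg at hcon
    have hbad : ∀ K, ∃ k, K ≤ k ∧ cnt s x (i + k * n) n = mw s x n + 1 := by
      intro K
      obtain ⟨k, hk, hne⟩ := hcon K
      exact ⟨k, hk, (hcnt _).resolve_left hne⟩
    obtain ⟨k1, _, hk1⟩ := hbad 0
    obtain ⟨k2, hk2ge, hk2⟩ := hbad (k1 + 1)
    obtain ⟨k3, hk3ge, hk3⟩ := hbad (k2 + 1)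
    have d1 : gf s x (i + k1 * n) + 1 ≤ gf s x (i + (k1 + 1) * n) := by
      have := hdrop (i + k1 * n) hk1
      calc gf s x (i + k1 * n) + 1 ≤ gf s x ((i + k1 * n) + n) := this
        _ = gf s x (i + (k1 + 1) * n) := by ring_nf
    have d2 : gf s x (i + k2 * n) + 1 ≤ gf s x (i + (k2 + 1) * n) := by
      have := hdrop (i + k2 * n) hk2
      calc gf s x (i + k2 * n) + 1 ≤ gf s x ((i + k2 * n) + n) := this
        _ = gf s x (i + (k2 + 1) * n) := by ring_nf
    have d3 : gf s x (i + k3 * n) + 1 ≤ gf s x (i + (k3 + 1) * n) := by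
      have := hdrop (i + k3 * n) hk3
      calc gf s x (i + k3 * n) + 1 ≤ gf s x ((i + k3 * n) + n) := this
        _ = gf s x (i + (k3 + 1) * n) := by ring_nf
    have m1 := hmono i (k1 + 1) k2 hk2ge
    have m2 := hmono i (k2 + 1) k3 hk3ge
    have m0 := hmono i 0 k1 (Nat.zero_le _)
    have b1 := (gf_bounds hb x (i + (k3 + 1) * n)).2
    have b2 := (gf_bounds hb x (i + 0 * n)).1
    linarith
  choose K hK using hev
  set B := (Finset.range n).sup K with hB
  apply hap
  apply periodic_of_const (s := s) (x := x) (n := n) (c := mw s x n)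
    (N := n * (B + 1)) hn
  intro j hj
  have hjeq : j = j % n + (j / n) * n := by
    rw [mul_comm]
    exact (Nat.mod_add_div j n).symm
  have hmod : j % n < n := Nat.mod_lt _ hn
  have hdiv : B + 1 ≤ j / n := by
    have : n * (B + 1) / n ≤ j / n := Nat.div_le_div_right hj
    rwa [Nat.mul_div_cancel_left _ hn] at this
  have hKle : K (j % n) ≤ B := Finset.le_sup (Finset.mem_range.mpr hmod)
  rw [hjeq]
  exact hK (j % n) (j / n) (by omega)


lemma gf_lt_one (hb : BalancedW s) (hap : ¬ EventuallyPeriodic s) (x : Bool)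
    {j : ℕ} (hj : 0 < j) : gf s x j < 1 := by
  have h1 := cnt_le hb x 0 j
  have h2 := al_strict_lb hb hap x hj
  have : (cnt s x 0 j : ℝ) ≤ mw s x j + 1 := by exact_mod_cast h1
  unfold gf
  linarith

lemma gf_gt_neg_one (hb : BalancedW s) (hap : ¬ EventuallyPeriodic s) (x : Bool)
    {j : ℕ} (hj : 0 < j) : -1 < gf s x j := by
  have h1 := mw_le s x 0 j
  have h2 := al_strict_ub hb hap x hj
  have : (mw s x j : ℝ) ≤ cnt s x 0 j := by exact_mod_cast h1
  unfold gf
  linarith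

lemma not_all_rich (hb : BalancedW s) (hap : ¬ EventuallyPeriodic s)
    (U : ℕ → List Bool) (hfac : Factorization s U) (hpre : ∀ i, PrefixOf s (U i))
    (x : Bool) : ¬ ∀ i, RichIn s (U i) x := by
  intro hrich
  set ℓ : ℕ → ℕ := fun i => (U i).length with hl
  have hlpos : ∀ i, 0 < ℓ i := fun i => List.length_pos_iff.mpr (hfac.1 i)
  have hUW : ∀ i, U i = W s 0 (ℓ i) := by
    intro i
    rw [W_zero_eq]
    exact hpre i
  set ns : ℕ → ℕ := fun k => ∑ t ∈ Finset.range k, ℓ t with hns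
  have hns0 : ns 0 = 0 := by simp [hns]
  have hnssucc : ∀ k, ns (k + 1) = ns k + ℓ k := by
    intro k; simp [hns, Finset.sum_range_succ]
  have hnspos : ∀ k, 0 < k → 0 < ns k := by
    intro k hk
    obtain ⟨m, rfl⟩ : ∃ m, k = m + 1 := ⟨k - 1, by omega⟩
    rw [hnssucc]
    have := hlpos m
    omega
  have hJlen : ∀ k, (((List.range k).map U).flatten).length = ns k := by
    intro k
    induction k with
    | zero => simp [hns0]
    | succ k ih =>
      rw [List.range_succ, hnssucc, ← ih]
      simp [hl]
  -- block k equals the prefix of length ℓ k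
  have hblock : ∀ k, W s (ns k) (ℓ k) = W s 0 (ℓ k) := by
    intro k
    have p1 := hfac.2 (k + 1)
    have p0 := hfac.2 k
    rw [PrefixOf] at p1 p0
    have hJsplit : ((List.range (k + 1)).map U).flatten
        = ((List.range k).map U).flatten ++ U k := by
      rw [List.range_succ]
      simp
    rw [hJsplit] at p1
    have hlen1 : (((List.range k).map U).flatten ++ U k).length = ns k + ℓ k := by
      rw [List.length_append, hJlen]
    rw [hlen1] at p1
    have hsplit2 : (List.range (ns k + ℓ k)).map s
        = (List.range (ns k)).map s ++ W s (ns k) (ℓ k) := by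
      rw [List.range_add, List.map_append, List.map_map]
      rfl
    rw [hsplit2] at p1
    rw [hJlen] at p0
    rw [p0] at p1
    have h5 := (List.append_inj p1 rfl).2
    rw [← h5]
    exact hUW k
  have hagree : ∀ k t, t ≤ ℓ k → cnt s x (ns k) t = cnt s x 0 t := by
    intro k t ht
    unfold cnt
    rw [← W_take (s := s) ht (ns k), ← W_take (s := s) ht 0, hblock]
  have hrc : ∀ k, cnt s x 0 (ℓ k) = mw s x (ℓ k) + 1 := by
    intro k
    obtain ⟨v, hv, hvlen, hvlt⟩ := hrich k
    obtain ⟨i, hvi⟩ := hv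
    have hvW : v = W s i (ℓ k) := by rw [hvi, hvlen]; rfl
    have h1 : cnt s x i (ℓ k) < cnt s x 0 (ℓ k) := by
      unfold cnt
      rw [← hvW, ← hUW k]
      exact hvlt
    have h2 := mw_le s x i (ℓ k)
    have h3 := cnt_le hb x 0 (ℓ k)
    omega
  set δ : ℕ → ℝ := fun k => (mw s x (ℓ k) : ℝ) + 1 - (ℓ k) * al s x with hδ
  have hδpos : ∀ k, 0 < δ k := by
    intro k
    have := al_strict_ub hb hap x (hlpos k)
    simp only [hδ]
    linarith
  have hcnt_ns : ∀ k, cnt s x 0 (ns (k + 1)) = cnt s x 0 (ns k) + cnt s x 0 (ℓ k) := by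
    intro k
    rw [hnssucc, cnt_add]
    congr 1
    rw [show 0 + ns k = ns k from by omega]
    exact hagree k (ℓ k) le_rfl
  have hgsum : ∀ k, gf s x (ns k) = ∑ t ∈ Finset.range k, δ t := by
    intro k
    induction k with
    | zero => simp [hns0, gf, cnt_zero]
    | succ k ih =>
      rw [Finset.sum_range_succ, ← ih]
      simp only [gf]
      rw [hcnt_ns k, hrc k, hnssucc]
      simp only [hδ]
      push_cast
      ring
  have hsumlt : ∀ k, ∑ t ∈ Finset.range k, δ t < 1 := by
    intro k
    cases k with
    | zero => simp
    | succ k =>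
      rw [← hgsum]
      exact gf_lt_one hb hap x (hnspos _ (by omega))
  -- the sup G
  have hGbdd : BddAbove (Set.range fun j : ℕ => gf s x (j + 1)) := by
    refine ⟨1, ?_⟩
    rintro r ⟨j, rfl⟩
    exact (gf_lt_one hb hap x (by omega : 0 < j + 1)).le
  set G := sSup (Set.range fun j : ℕ => gf s x (j + 1)) with hG
  obtain ⟨r, ⟨p, rfl⟩, hpgt⟩ :=
    exists_lt_of_lt_csSup (Set.range_nonempty _) (by linarith [hδpos 0] : G - δ 0 < G)
  set P := p + 1 with hP
  have hPpos : 0 < P := by omega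
  -- find a block of length ≥ P
  have hbig : ∃ k, 1 ≤ k ∧ P ≤ ℓ k := by
    by_contra hcon
    push_neg at hcon
    have hIne : (Finset.Icc 1 P).Nonempty := ⟨1, by simp [Finset.mem_Icc]; omega⟩
    set ε := (Finset.Icc 1 P).inf' hIne (fun L => (mw s x L : ℝ) + 1 - L * al s x) with hε
    have hεpos : 0 < ε := by
      rw [hε, Finset.lt_inf'_iff]
      intro L hL
      have hLpos : 0 < L := by
        simp only [Finset.mem_Icc] at hL
        omega
      have := al_strict_ub hb hap x hLpos
      linarith
    have hδε : ∀ k, 1 ≤ k → ε ≤ δ k := by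
      intro k hk
      have h1 := hcon k hk
      have hmem : ℓ k ∈ Finset.Icc 1 P := by
        simp only [Finset.mem_Icc]
        exact ⟨hlpos k, by omega⟩
      exact Finset.inf'_le _ hmem
    obtain ⟨M, hM⟩ := exists_nat_gt (1 / ε)
    have hMε : 1 < (M : ℝ) * ε := by
      rw [div_lt_iff₀ hεpos] at hM
      linarith
    have hsumge : (M : ℝ) * ε ≤ ∑ t ∈ Finset.range (M + 1), δ t := by
      rw [Finset.sum_range_succ']
      have h1 : ∑ t ∈ Finset.range M, δ (t + 1) ≥ ∑ _t ∈ Finset.range M, ε :=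
        Finset.sum_le_sum fun t _ => hδε (t + 1) (by omega)
      have h2 : ∑ _t ∈ Finset.range M, ε = M * ε := by
        rw [Finset.sum_const, Finset.card_range]
        simp [nsmul_eq_mul]
      have := (hδpos 0).le
      linarith
    have := hsumlt (M + 1)
    linarith
  obtain ⟨k, hk1, hkP⟩ := hbig
  have hσ : δ 0 ≤ gf s x (ns k) := by
    rw [hgsum]
    exact Finset.single_le_sum (f := δ) (fun t _ => (hδpos t).le)
      (Finset.mem_range.mpr (by omega))
  have hcntP : cnt s x 0 (ns k + P) = cnt s x 0 (ns k) + cnt s x 0 P := by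
    rw [cnt_add]
    congr 1
    rw [show 0 + ns k = ns k from by omega]
    exact hagree k P hkP
  have hgfP : gf s x (ns k + P) = gf s x (ns k) + gf s x P := by
    simp only [gf]
    rw [hcntP]
    push_cast
    ring
  have hmemG : gf s x (ns k + P) ≤ G := by
    apply le_csSup hGbdd
    refine ⟨ns k + p, ?_⟩
    have he : ns k + p + 1 = ns k + P := by omega
    simp only [he]
  rw [hgfP] at hmemG
  linarith

lemma rich_some (hap : ¬ EventuallyPeriodic s) (u : List Bool) (hne : u ≠ [])
    (hpre : PrefixOf s u) : RichIn s u true ∨ RichIn s u false := by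
  by_contra hcon
  push_neg at hcon
  obtain ⟨h1, h2⟩ := hcon
  have hn : 0 < u.length := List.length_pos_iff.mpr hne
  have hu : u = W s 0 u.length := by rw [W_zero_eq]; exact hpre
  have hmin : ∀ (x : Bool) (j : ℕ), u.count x ≤ cnt s x j u.length := by
    intro x j
    by_contra hlt
    push_neg at hlt
    have hr : RichIn s u x := ⟨W s j u.length, factorOf_W s j u.length, length_W s j u.length, hlt⟩
    cases x
    · exact h2 hr
    · exact h1 hr
  have hconst : ∀ j, cnt s true j u.length = cnt s true 0 u.length := by
    intro j
    have t0 := hmin true j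
    have f0 := hmin false j
    have ht : u.count true = cnt s true 0 u.length := by
      conv_lhs => rw [hu]
      rfl
    have hf : u.count false = cnt s false 0 u.length := by
      conv_lhs => rw [hu]
      rfl
    have e1 := cnt_total s j u.length
    have e2 := cnt_total s 0 u.length
    omega
  exact hap (periodic_of_const (s := s) (x := true) (n := u.length)
    (c := cnt s true 0 u.length) (N := 0) hn (fun j _ => hconst j))

end S16

/-- In any factorization of a Sturmian word into non-empty prefixes, two blocks are rich in
different letters. -/
theorem stmt_16 (s : ℕ → Bool) (hs : Sturmian s) (U : ℕ → List Bool)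
    (hfac : Factorization s U) (hpre : ∀ i, PrefixOf s (U i)) :
    ∃ (i j : ℕ) (x : Bool), RichIn s (U i) x ∧ ¬ RichIn s (U j) x := by
  obtain ⟨hap, hb⟩ := hs
  have h1 := S16.not_all_rich hb hap U hfac hpre true
  have h2 := S16.not_all_rich hb hap U hfac hpre false
  obtain ⟨j1, hj1⟩ := not_forall.mp h1
  obtain ⟨j2, hj2⟩ := not_forall.mp h2
  rcases S16.rich_some hap (U j1) (hfac.1 j1) (hpre j1) with h | h
  · exact absurd h hj1
  · exact ⟨j1, j2, false, h, hj2⟩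
end

section
/- For every Sturmian word s there exists a coloring c of the non-empty factors of s using 3 colors such that no factorization of s into non-empty factors is monochromatic: for every factorization s = V_1 V_2 ⋯ there exist i, j with c(V_i) ≠ c(V_j). -/
namespace Stmt17

/-- The window of length `n` of `s` starting at position `q`. -/
def win (s : ℕ → Bool) (q n : ℕ) : List Bool := (List.range n).map fun r => s (q + r)

@[simp] lemma win_length (s : ℕ → Bool) (q n : ℕ) : (win s q n).length = n := by simp [win]

lemma factor_win (s : ℕ → Bool) (q n : ℕ) : FactorOf s (win s q n) := ⟨q, by simp [win]⟩

lemma factor_eq_win {s : ℕ → Bool} {u : List Bool} (h : FactorOf s u) :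
    ∃ q, u = win s q u.length := h

lemma prefix_iff {s : ℕ → Bool} {u : List Bool} : PrefixOf s u ↔ u = win s 0 u.length := by
  unfold PrefixOf win
  constructor
  · intro h; rw [h]; simp
  · intro h; rw [h]; simp

/-- count of `true` in the window -/
def cnt (s : ℕ → Bool) (q n : ℕ) : ℕ := (win s q n).count true

@[simp] lemma cnt_zero (s : ℕ → Bool) (q : ℕ) : cnt s q 0 = 0 := by simp [cnt, win]

lemma win_append (s : ℕ → Bool) (q a b : ℕ) :
    win s q (a + b) = win s q a ++ win s (q + a) b := by
  unfold win
  rw [List.range_add, List.map_append, List.map_map]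
  congr 1
  apply List.map_congr_left
  intro r _
  simp [Function.comp, Nat.add_assoc]

lemma cnt_add (s : ℕ → Bool) (q a b : ℕ) :
    cnt s q (a + b) = cnt s q a + cnt s (q + a) b := by
  unfold cnt
  rw [win_append, List.count_append]

lemma cnt_one (s : ℕ → Bool) (q : ℕ) : cnt s q 1 = if s q then 1 else 0 := by
  have : List.range 1 = [0] := rfl
  cases h : s q <;> simp [cnt, win, this, h]

lemma cnt_le (s : ℕ → Bool) (q n : ℕ) : cnt s q n ≤ n := by
  have := List.count_le_length (l := win s q n) (a := true)
  simpa [cnt] using this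

lemma win_eq_elem {s : ℕ → Bool} {q q' n : ℕ} (h : win s q n = win s q' n) :
    ∀ r < n, s (q + r) = s (q' + r) := by
  intro r hr
  have h1 : (win s q n)[r]'(by simpa using hr) = (win s q' n)[r]'(by simpa using hr) := by
    simp [h]
  simpa [win] using h1

lemma win_eq_of_elem {s : ℕ → Bool} {q q' n : ℕ} (h : ∀ r < n, s (q + r) = s (q' + r)) :
    win s q n = win s q' n := by
  apply List.ext_getElem (by simp)
  intro r hr hr'
  simp only [win, List.getElem_map, List.getElem_range]
  exact h r (by simpa using hr)


section MinMax

variable (s : ℕ → Bool)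

/-- minimal number of `true`s in a factor of length `n` -/
noncomputable def mn (n : ℕ) : ℕ := sInf (Set.range fun q => cnt s q n)

/-- maximal number of `true`s in a factor of length `n` -/
noncomputable def mx (n : ℕ) : ℕ := sSup (Set.range fun q => cnt s q n)

lemma mn_le (q n : ℕ) : mn s n ≤ cnt s q n := Nat.sInf_le ⟨q, rfl⟩

lemma exists_mn (n : ℕ) : ∃ q, cnt s q n = mn s n := Nat.sInf_mem (Set.range_nonempty _)

lemma cnt_bddAbove (n : ℕ) : BddAbove (Set.range fun q => cnt s q n) := by
  refine ⟨n, ?_⟩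
  rintro x ⟨q, rfl⟩
  exact cnt_le s q n

lemma le_mx (q n : ℕ) : cnt s q n ≤ mx s n := le_csSup (cnt_bddAbove s n) ⟨q, rfl⟩

lemma exists_mx (n : ℕ) : ∃ q, cnt s q n = mx s n :=
  Nat.sSup_mem (Set.range_nonempty _) (cnt_bddAbove s n)

@[simp] lemma mn_zero : mn s 0 = 0 :=
  Nat.le_antisymm (by simpa using mn_le s 0 0) (Nat.zero_le _)

lemma mn_le_mx (n : ℕ) : mn s n ≤ mx s n := (mn_le s 0 n).trans (le_mx s 0 n)

variable {s}

lemma cnt_balance (hb : BalancedW s) (q q' n : ℕ) : cnt s q n ≤ cnt s q' n + 1 := by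
  have h := hb (win s q n) (win s q' n) (factor_win s q n) (factor_win s q' n)
    (by simp) true
  have h2 := (abs_le.mp h).2
  have : (cnt s q n : ℤ) ≤ (cnt s q' n : ℤ) + 1 := by
    unfold cnt; omega
  exact_mod_cast this

lemma mx_le_mn_add_one (hb : BalancedW s) (n : ℕ) : mx s n ≤ mn s n + 1 := by
  obtain ⟨q1, h1⟩ := exists_mx s n
  obtain ⟨q2, h2⟩ := exists_mn s n
  rw [← h1, ← h2]
  exact cnt_balance hb q1 q2 n

lemma exists_neq (hap : ¬ EventuallyPeriodic s) {n : ℕ} (hn : 0 < n) :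
    ∃ i, s i ≠ s (i + n) := by
  by_contra hc
  push_neg at hc
  exact hap ⟨n, hn, 0, fun m _ => (hc m).symm⟩

lemma cnt_succ_split (q n : ℕ) :
    cnt s q (n + 1) = cnt s q n + (if s (q + n) then 1 else 0) := by
  rw [cnt_add s q n 1, cnt_one]

lemma cnt_split_one (q n : ℕ) :
    cnt s q (1 + n) = (if s q then 1 else 0) + cnt s (q + 1) n := by
  rw [cnt_add s q 1 n, cnt_one]

lemma mn_lt_mx (hb : BalancedW s) (hap : ¬ EventuallyPeriodic s) {n : ℕ} (hn : 0 < n) :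
    mn s n + 1 = mx s n := by
  obtain ⟨i, hi⟩ := exists_neq hap hn
  have e1 : cnt s i (n + 1) = cnt s i n + (if s (i + n) then 1 else 0) := cnt_succ_split i n
  have e2 : cnt s i (n + 1) = (if s i then 1 else 0) + cnt s (i + 1) n := by
    have := cnt_split_one (s := s) i n
    rwa [Nat.add_comm 1 n] at this
  have hne : cnt s i n ≠ cnt s (i + 1) n := by
    intro he
    cases h1 : s i <;> cases h2 : s (i + n) <;> simp [h1, h2] at e1 e2 <;>
      first
        | exact hi (h1.trans h2.symm)
        | omega
  have hle := mx_le_mn_add_one hb n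
  have b1 := mn_le s i n
  have b2 := mn_le s (i+1) n
  have c1 := le_mx s i n
  have c2 := le_mx s (i+1) n
  omega

lemma cnt_mem_pair (hb : BalancedW s) (q n : ℕ) :
    cnt s q n = mn s n ∨ cnt s q n = mn s n + 1 := by
  have := mn_le s q n
  have := le_mx s q n
  have := mx_le_mn_add_one hb n
  omega

lemma mn_superadd (a b : ℕ) : mn s a + mn s b ≤ mn s (a + b) := by
  obtain ⟨q, hq⟩ := exists_mn s (a + b)
  rw [← hq, cnt_add]
  exact Nat.add_le_add (mn_le s q a) (mn_le s (q + a) b)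

lemma mx_subadd (a b : ℕ) : mx s (a + b) ≤ mx s a + mx s b := by
  obtain ⟨q, hq⟩ := exists_mx s (a + b)
  rw [← hq, cnt_add]
  exact Nat.add_le_add (le_mx s q a) (le_mx s (q + a) b)

lemma mn_mul (k n : ℕ) : k * mn s n ≤ mn s (k * n) := by
  induction k with
  | zero => simp
  | succ k ih =>
    have : (k + 1) * n = k * n + n := by ring
    rw [this, Nat.succ_mul]
    exact le_trans (Nat.add_le_add_right ih _) (mn_superadd _ _)

lemma mx_zero : mx s 0 = 0 :=
  Nat.le_antisymm (csSup_le (Set.range_nonempty _) (by rintro x ⟨q, rfl⟩; simp)) (Nat.zero_le _)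

lemma mx_mul (k n : ℕ) : mx s (k * n) ≤ k * mx s n := by
  induction k with
  | zero => simp [mx_zero]
  | succ k ih =>
    have h1 : (k + 1) * n = k * n + n := by ring
    rw [h1, Nat.succ_mul]
    exact le_trans (mx_subadd _ _) (Nat.add_le_add_right ih _)

lemma cross (a b : ℕ) : b * mn s a ≤ a * mx s b := by
  calc b * mn s a ≤ mn s (b * a) := mn_mul b a
    _ ≤ mx s (b * a) := mn_le_mx s _
    _ = mx s (a * b) := by rw [Nat.mul_comm]
    _ ≤ a * mx s b := mx_mul a b

end MinMax


section Alpha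

variable (s : ℕ → Bool)

/-- the slope of `s` -/
noncomputable def alp : ℝ := sSup (Set.range fun n : ℕ => (mn s (n + 1) : ℝ) / (n + 1))

lemma alp_bddAbove : BddAbove (Set.range fun n : ℕ => (mn s (n + 1) : ℝ) / (n + 1)) := by
  refine ⟨(mx s 1 : ℝ), ?_⟩
  rintro x ⟨n, rfl⟩
  have h := cross (s := s) (n + 1) 1
  rw [Nat.one_mul] at h
  have h' : (mn s (n + 1) : ℝ) ≤ (n + 1 : ℝ) * (mx s 1 : ℝ) := by exact_mod_cast h
  rw [div_le_iff₀ (by positivity)]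
  linarith

lemma mn_le_alp (n : ℕ) : (mn s n : ℝ) ≤ n * alp s := by
  cases n with
  | zero => simp
  | succ m =>
    have h : (mn s (m + 1) : ℝ) / ((m:ℝ) + 1) ≤ alp s :=
      le_csSup (alp_bddAbove s) (Set.mem_range_self m)
    have hpos : (0:ℝ) < (m : ℝ) + 1 := by positivity
    rw [div_le_iff₀ hpos] at h
    have he : ((m + 1 : ℕ) : ℝ) = (m : ℝ) + 1 := by push_cast; ring
    rw [he]
    linarith

lemma alp_nonneg : 0 ≤ alp s := by
  have h := mn_le_alp s 1
  have h0 : (0:ℝ) ≤ (mn s 1 : ℝ) := by positivity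
  push_cast at h
  linarith

lemma alp_le_mx {n : ℕ} (hn : 0 < n) : (n : ℝ) * alp s ≤ (mx s n : ℝ) := by
  have hnp : (0:ℝ) < (n:ℝ) := by exact_mod_cast hn
  have hub : ∀ k : ℕ, (mn s (k + 1) : ℝ) / ((k:ℝ) + 1) ≤ (mx s n : ℝ) / n := by
    intro k
    have h := cross (s := s) (a := k + 1) (b := n)
    have h' : ((n : ℝ)) * (mn s (k+1) : ℝ) ≤ ((k:ℝ) + 1) * (mx s n : ℝ) := by
      have := (Nat.cast_le (α := ℝ)).mpr h
      push_cast at this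
      linarith
    rw [div_le_div_iff₀ (by positivity) hnp]
    linarith
  have h : alp s ≤ (mx s n : ℝ) / n :=
    csSup_le (Set.range_nonempty _) (by rintro x ⟨k, rfl⟩; exact hub k)
  rw [le_div_iff₀ hnp] at h
  linarith [h]

variable {s}

lemma alp_le_mn_add_one (hb : BalancedW s) {n : ℕ} (hn : 0 < n) :
    (n : ℝ) * alp s ≤ (mn s n : ℝ) + 1 := by
  have h := alp_le_mx s hn
  have h2 := mx_le_mn_add_one hb n
  have h2' : (mx s n : ℝ) ≤ (mn s n : ℝ) + 1 := by exact_mod_cast h2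
  linarith

lemma cnt_mul (q : ℕ) : ∀ T i, cnt s i (T * q) = ∑ t ∈ Finset.range T, cnt s (i + t * q) q := by
  intro T
  induction T with
  | zero => simp
  | succ T ih =>
    intro i
    have h1 : (T + 1) * q = T * q + q := by ring
    rw [h1, cnt_add, Finset.sum_range_succ, ih]

lemma irr (hb : BalancedW s) (hap : ¬ EventuallyPeriodic s) :
    ∀ q : ℕ, 0 < q → ∀ p : ℤ, (q : ℝ) * alp s ≠ (p : ℝ) := by
  intro q hq p hp
  have hp0 : (0:ℝ) ≤ (p:ℝ) := by
    rw [← hp]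
    exact mul_nonneg (by positivity) (alp_nonneg s)
  have hp0' : 0 ≤ p := by exact_mod_cast hp0
  set pn : ℕ := p.toNat with hpn_def
  have hpn : (pn : ℝ) = (q : ℝ) * alp s := by
    rw [hp]
    exact_mod_cast congrArg (Int.cast : ℤ → ℝ) (Int.toNat_of_nonneg hp0')
  have hb1 : (mn s q : ℝ) ≤ (pn : ℝ) := by rw [hpn]; exact mn_le_alp s q
  have hb2 : (pn : ℝ) ≤ (mn s q : ℝ) + 1 := by rw [hpn]; exact alp_le_mn_add_one hb hq
  have hb1' : mn s q ≤ pn := by exact_mod_cast hb1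
  have hb2' : pn ≤ mn s q + 1 := by exact_mod_cast hb2
  have hTub : ∀ T : ℕ, (mn s (T * q) : ℝ) ≤ (T : ℝ) * pn := by
    intro T
    have h := mn_le_alp s (T * q)
    have he : ((T * q : ℕ) : ℝ) * alp s = (T : ℝ) * ((q:ℝ) * alp s) := by push_cast; ring
    rw [he, ← hpn] at h
    exact h
  have hTlb : ∀ T : ℕ, 0 < T → (T : ℝ) * pn ≤ (mn s (T * q) : ℝ) + 1 := by
    intro T hT
    have h := alp_le_mn_add_one hb (n := T * q) (Nat.mul_pos hT hq)
    have he : ((T * q : ℕ) : ℝ) * alp s = (T : ℝ) * ((q:ℝ) * alp s) := by push_cast; ring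
    rw [he, ← hpn] at h
    exact h
  have key : ∀ i t : ℕ, 0 < t → cnt s i q ≠ pn → cnt s (i + t * q) q = pn := by
    intro i t ht hbad
    by_contra hbad2
    set T := t + 1 with hT
    have hsum := cnt_mul (s := s) q T i
    have hcast : ((cnt s i (T * q) : ℤ)) = ∑ t' ∈ Finset.range T, (cnt s (i + t' * q) q : ℤ) := by
      exact_mod_cast congrArg (Nat.cast : ℕ → ℤ) hsum
    have hmnub : (mn s (T * q) : ℤ) ≤ (T:ℤ) * pn := by exact_mod_cast hTub T
    have hmnlb : (T:ℤ) * pn ≤ (mn s (T * q) : ℤ) + 1 := by exact_mod_cast hTlb T (by omega)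
    have hcntub : (cnt s i (T * q) : ℤ) ≤ (mn s (T * q) : ℤ) + 1 := by
      have h1 := le_mx s i (T * q)
      have h2 := mx_le_mn_add_one hb (T * q)
      exact_mod_cast Nat.le_trans h1 h2
    have hcntlb : (mn s (T * q) : ℤ) ≤ (cnt s i (T * q) : ℤ) := by
      exact_mod_cast mn_le s i (T * q)
    have hpair : ({0, t} : Finset ℕ) ⊆ Finset.range T := by
      intro x hx
      simp only [Finset.mem_insert, Finset.mem_singleton] at hx
      rcases hx with rfl | rfl <;> simp only [Finset.mem_range] <;> omega
    rcases hb1'.lt_or_eq with hA | hA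
    · -- pn = mn s q + 1 ; bad means count = mn s q
      have hterm : ∀ x : ℕ, 0 ≤ ((pn:ℤ) - cnt s (i + x * q) q) := by
        intro x
        rcases cnt_mem_pair hb (i + x * q) q with h | h <;> rw [h] <;> omega
      have hbadterm1 : 1 ≤ ((pn:ℤ) - cnt s i q) := by
        rcases cnt_mem_pair hb i q with h | h
        · rw [h]; omega
        · exfalso; exact hbad (by omega)
      have hbadterm2 : 1 ≤ ((pn:ℤ) - cnt s (i + t * q) q) := by
        rcases cnt_mem_pair hb (i + t * q) q with h | h
        · rw [h]; omega
        · exfalso; exact hbad2 (by omega)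
      have hle : ∑ t' ∈ ({0, t} : Finset ℕ), ((pn:ℤ) - cnt s (i + t' * q) q) ≤
          ∑ t' ∈ Finset.range T, ((pn:ℤ) - cnt s (i + t' * q) q) :=
        Finset.sum_le_sum_of_subset_of_nonneg hpair (fun x _ _ => hterm x)
      have hsp : ∑ t' ∈ ({0, t} : Finset ℕ), ((pn:ℤ) - cnt s (i + t' * q) q) =
          ((pn:ℤ) - cnt s i q) + ((pn:ℤ) - cnt s (i + t * q) q) := by
        rw [Finset.sum_pair (by omega : (0:ℕ) ≠ t)]
        simp
      have hsumZ : ∑ t' ∈ Finset.range T, ((pn:ℤ) - cnt s (i + t' * q) q) =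
          (T : ℤ) * pn - (cnt s i (T * q) : ℤ) := by
        rw [Finset.sum_sub_distrib, Finset.sum_const, Finset.card_range, ← hcast]
        push_cast
        ring
      rw [hsp, hsumZ] at hle
      omega
    · -- pn = mn s q ; bad means count = mn s q + 1
      have hterm : ∀ x : ℕ, 0 ≤ ((cnt s (i + x * q) q : ℤ) - pn) := by
        intro x
        rcases cnt_mem_pair hb (i + x * q) q with h | h <;> rw [h] <;> omega
      have hbadterm1 : 1 ≤ ((cnt s i q : ℤ) - pn) := by
        rcases cnt_mem_pair hb i q with h | h
        · exfalso; exact hbad (by omega)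
        · rw [h]; omega
      have hbadterm2 : 1 ≤ ((cnt s (i + t * q) q : ℤ) - pn) := by
        rcases cnt_mem_pair hb (i + t * q) q with h | h
        · exfalso; exact hbad2 (by omega)
        · rw [h]; omega
      have hle : ∑ t' ∈ ({0, t} : Finset ℕ), ((cnt s (i + t' * q) q : ℤ) - pn) ≤
          ∑ t' ∈ Finset.range T, ((cnt s (i + t' * q) q : ℤ) - pn) :=
        Finset.sum_le_sum_of_subset_of_nonneg hpair (fun x _ _ => hterm x)
      have hsp : ∑ t' ∈ ({0, t} : Finset ℕ), ((cnt s (i + t' * q) q : ℤ) - pn) =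
          ((cnt s i q : ℤ) - pn) + ((cnt s (i + t * q) q : ℤ) - pn) := by
        rw [Finset.sum_pair (by omega : (0:ℕ) ≠ t)]
        simp
      have hsumZ : ∑ t' ∈ Finset.range T, ((cnt s (i + t' * q) q : ℤ) - pn) =
          (cnt s i (T * q) : ℤ) - (T : ℤ) * pn := by
        rw [Finset.sum_sub_distrib, Finset.sum_const, Finset.card_range, ← hcast]
        push_cast
        ring
      rw [hsp, hsumZ] at hle
      omega
  -- the set of "bad" positions is finite
  have hBfin : {i : ℕ | cnt s i q ≠ pn}.Finite := by
    have hinj : Set.InjOn (· % q) {i : ℕ | cnt s i q ≠ pn} := by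
      intro i hi j hj hmod
      by_contra hne
      rcases Nat.lt_or_ge i j with hij | hij
      · have hm : i ≡ j [MOD q] := hmod
        obtain ⟨tt, htt⟩ := (Nat.modEq_iff_dvd' hij.le).mp hm
        rw [Nat.mul_comm] at htt
        rcases Nat.eq_zero_or_pos tt with h0 | h0
        · subst h0; simp at htt; omega
        · exact hj (by rw [show j = i + tt * q by omega]; exact key i tt h0 hi)
      · rcases Nat.lt_or_ge j i with hij2 | hij2
        · have hm : j ≡ i [MOD q] := hmod.symm
          obtain ⟨tt, htt⟩ := (Nat.modEq_iff_dvd' hij2.le).mp hm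
          rw [Nat.mul_comm] at htt
          rcases Nat.eq_zero_or_pos tt with h0 | h0
          · subst h0; simp at htt; omega
          · exact hi (by rw [show i = j + tt * q by omega]; exact key j tt h0 hj)
        · omega
    apply Set.Finite.of_finite_image ?_ hinj
    apply Set.Finite.subset (Set.finite_Iio q)
    rintro x ⟨i, _, rfl⟩
    exact Nat.mod_lt i hq
  obtain ⟨N, hN⟩ := hBfin.bddAbove
  have hQ : ∀ i, N < i → cnt s i q = pn := by
    intro i hi
    by_contra hbad
    exact absurd (hN hbad) (by omega)
  apply hap
  refine ⟨q, hq, N + 1, ?_⟩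
  intro n hn
  have e1 : cnt s n (q + 1) = cnt s n q + (if s (n + q) then 1 else 0) := cnt_succ_split n q
  have e2 : cnt s n (q + 1) = (if s n then 1 else 0) + cnt s (n + 1) q := by
    have := cnt_split_one (s := s) n q
    rwa [Nat.add_comm 1 q] at this
  have q1 : cnt s n q = pn := hQ n (by omega)
  have q2 : cnt s (n + 1) q = pn := hQ (n + 1) (by omega)
  rw [q1] at e1
  rw [q2] at e2
  cases hx : s n <;> cases hy : s (n + q) <;> simp [hx, hy] at e1 e2 <;> first | rfl | omega

end Alpha


section Fract

variable {s : ℕ → Bool}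

lemma mn_lt_alp (hb : BalancedW s) (hap : ¬ EventuallyPeriodic s) {n : ℕ} (hn : 0 < n) :
    (mn s n : ℝ) < n * alp s := by
  rcases lt_or_eq_of_le (mn_le_alp s n) with h | h
  · exact h
  · exfalso
    exact irr hb hap n hn (mn s n : ℤ) (by rw [← h]; push_cast; ring)

lemma alp_lt_mn_add_one (hb : BalancedW s) (hap : ¬ EventuallyPeriodic s) {n : ℕ} (hn : 0 < n) :
    (n : ℝ) * alp s < (mn s n : ℝ) + 1 := by
  rcases lt_or_eq_of_le (alp_le_mn_add_one hb hn) with h | h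
  · exact h
  · exfalso
    exact irr hb hap n hn ((mn s n : ℤ) + 1) (by rw [h]; push_cast; ring)

/-- fractional part of `n·α` -/
noncomputable def fr (s : ℕ → Bool) (n : ℕ) : ℝ := (n : ℝ) * alp s - (mn s n : ℝ)

lemma fr_pos (hb : BalancedW s) (hap : ¬ EventuallyPeriodic s) {n : ℕ} (hn : 0 < n) :
    0 < fr s n := by
  have := mn_lt_alp hb hap hn
  unfold fr; linarith

lemma fr_lt_one (hb : BalancedW s) (hap : ¬ EventuallyPeriodic s) {n : ℕ} (hn : 0 < n) :
    fr s n < 1 := by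
  have := alp_lt_mn_add_one hb hap hn
  unfold fr; linarith

/-- The key evolution step: if the window at `q` of length `a` has the "rich" count
`mn + 1`, and the window at `q + a` of length `r` also has count `mn + 1`, then the
window at `q` of length `a + r` has count `mn + 1` and the fractional parts relate. -/
lemma evolve (hb : BalancedW s) (hap : ¬ EventuallyPeriodic s) {q a r : ℕ}
    (ha : 0 < a) (hr : 0 < r)
    (h1 : cnt s q a = mn s a + 1) (h2 : cnt s (q + a) r = mn s r + 1) :
    cnt s q (a + r) = mn s (a + r) + 1 ∧
      fr s (a + r) = fr s r - (1 - fr s a) ∧ 1 - fr s a < fr s r := by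
  have hsum : cnt s q (a + r) = mn s a + mn s r + 2 := by
    rw [cnt_add, h1, h2]; ring
  have hub : cnt s q (a + r) ≤ mn s (a + r) + 1 := by
    have h1' := le_mx s q (a + r)
    have h2' := mx_le_mn_add_one hb (a + r)
    omega
  have hlbR : (mn s (a + r) : ℝ) < ((a:ℝ) + r) * alp s := by
    have := mn_lt_alp hb hap (n := a + r) (by omega)
    push_cast at this
    linarith
  have haR := mn_lt_alp hb hap ha
  have hrR := mn_lt_alp hb hap hr
  have haR2 := alp_lt_mn_add_one hb hap ha
  have hrR2 := alp_lt_mn_add_one hb hap hr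
  have hubR : ((a:ℝ) + r) * alp s < (mn s a : ℝ) + (mn s r : ℝ) + 2 := by nlinarith
  have hmn_ub : (mn s (a + r) : ℝ) < (mn s a : ℝ) + (mn s r : ℝ) + 2 := lt_trans hlbR hubR
  have hmn_ub' : mn s (a + r) < mn s a + mn s r + 2 := by exact_mod_cast hmn_ub
  have hmn_eq : mn s (a + r) = mn s a + mn s r + 1 := by omega
  have hcnt_eq : cnt s q (a + r) = mn s (a + r) + 1 := by omega
  refine ⟨hcnt_eq, ?_, ?_⟩
  · unfold fr
    rw [hmn_eq]
    push_cast
    ring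
  · have hfrpos := fr_pos hb hap (n := a + r) (by omega)
    have hfr_eq : fr s (a + r) = fr s a + fr s r - 1 := by
      unfold fr
      rw [hmn_eq]
      push_cast
      ring
    rw [hfr_eq] at hfrpos
    linarith

end Fract


section Key

/-- the set of fractional parts of rich lengths as seen from position `pos` -/
def Aset (s : ℕ → Bool) (pos : ℕ) : Set ℝ :=
  {x | ∃ r : ℕ, 0 < r ∧ cnt s pos r = mn s r + 1 ∧ x = fr s r}

noncomputable def iof (s : ℕ → Bool) (pos : ℕ) : ℝ := sInf (Aset s pos)

lemma Aset_bddBelow {s : ℕ → Bool} (pos : ℕ) : BddBelow (Aset s pos) := by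
  refine ⟨0, ?_⟩
  rintro x ⟨r, hr, hc, rfl⟩
  unfold fr
  have := mn_le_alp s r
  linarith

/-- The key impossibility: no factorization of a Sturmian word into prefixes that
are all rich in the letter `true`. -/
lemma key (s : ℕ → Bool) (hs : Sturmian s) (U : ℕ → List Bool)
    (hU : Factorization s U)
    (hPre : ∀ i, PrefixOf s (U i))
    (hRich : ∀ i, RichIn s (U i) true) : False := by
  obtain ⟨hap, hb⟩ := hs
  obtain ⟨hne, hjoin⟩ := hU
  set L : ℕ → ℕ := fun k => (U k).length with hLdef
  set N : ℕ → ℕ := fun k => (((List.range k).map U).flatten).length with hNdef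
  have hN0 : N 0 = 0 := by simp [hNdef]
  have hNsucc : ∀ k, N (k + 1) = N k + L k := by
    intro k
    simp [hNdef, hLdef, List.range_succ]
  have hLpos : ∀ k, 0 < L k := fun k => List.length_pos_iff.mpr (hne k)
  have hjoin' : ∀ k, ((List.range k).map U).flatten = win s 0 (N k) := by
    intro k
    exact (prefix_iff).mp (hjoin k)
  have hsplit : ∀ k, ((List.range (k + 1)).map U).flatten =
      ((List.range k).map U).flatten ++ U k := by
    intro k
    rw [List.range_succ]
    simp
  have hblock : ∀ k, U k = win s (N k) (L k) := by
    intro k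
    have h1 : win s 0 (N k) ++ U k = win s 0 (N k) ++ win s (N k) (L k) := by
      calc win s 0 (N k) ++ U k
          = ((List.range k).map U).flatten ++ U k := by rw [hjoin' k]
        _ = ((List.range (k + 1)).map U).flatten := (hsplit k).symm
        _ = win s 0 (N (k + 1)) := hjoin' (k + 1)
        _ = win s 0 (N k + L k) := by rw [hNsucc k]
        _ = win s 0 (N k) ++ win s (0 + N k) (L k) := win_append s 0 (N k) (L k)
        _ = win s 0 (N k) ++ win s (N k) (L k) := by rw [Nat.zero_add]
    exact List.append_cancel_left h1
  have hprefwin : ∀ k, U k = win s 0 (L k) := fun k => (prefix_iff).mp (hPre k)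
  have hmatch : ∀ k, win s (N k) (L k) = win s 0 (L k) :=
    fun k => (hblock k).symm.trans (hprefwin k)
  have hcntmatch : ∀ k j, j ≤ L k → cnt s (N k) j = cnt s 0 j := by
    intro k j hj
    unfold cnt
    congr 1
    apply win_eq_of_elem
    intro r hr
    exact win_eq_elem (hmatch k) r (lt_of_lt_of_le hr hj)
  have hrich0 : ∀ k, cnt s 0 (L k) = mn s (L k) + 1 := by
    intro k
    obtain ⟨v, hvfac, hvlen, hvlt⟩ := hRich k
    obtain ⟨qv, hqv⟩ := hvfac
    have hUc : (U k).count true = cnt s 0 (L k) := by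
      rw [hprefwin k]; rfl
    have hlen2 : v.length = L k := hvlen
    rw [hlen2] at hqv
    have hvc : v.count true = cnt s qv (L k) := by
      rw [hqv]; rfl
    rw [hUc, hvc] at hvlt
    have h1 := mn_le s qv (L k)
    rcases cnt_mem_pair hb 0 (L k) with h | h
    · omega
    · omega
  -- A-set facts specialized to the cut positions
  have hAne : ∀ k, (Aset s (N k)).Nonempty := by
    intro k
    exact ⟨fr s (L k), L k, hLpos k, by rw [hcntmatch k (L k) le_rfl]; exact hrich0 k, rfl⟩
  have hio_nonneg : ∀ k, 0 ≤ iof s (N k) := by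
    intro k
    apply le_csInf (hAne k)
    rintro x ⟨r, hr, hc, rfl⟩
    exact (fr_pos hb hap hr).le
  have hio_le : ∀ k j, 0 < j → j ≤ L k → cnt s 0 j = mn s j + 1 → iof s (N k) ≤ fr s j := by
    intro k j hj hjle hcj
    exact csInf_le (Aset_bddBelow _) ⟨j, hj, by rw [hcntmatch k j hjle]; exact hcj, rfl⟩
  have hio_step : ∀ k, iof s (N k) + (1 - fr s (L k)) ≤ iof s (N (k + 1)) := by
    intro k
    apply le_csInf (hAne (k + 1))
    rintro x ⟨r, hr, hc, rfl⟩
    have hc' : cnt s (N k + L k) r = mn s r + 1 := by rw [← hNsucc k]; exact hc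
    obtain ⟨he1, he2, he3⟩ := evolve hb hap (hLpos k) hr
      (by rw [hcntmatch k (L k) le_rfl]; exact hrich0 k) hc'
    have hmem : fr s (L k + r) ∈ Aset s (N k) := ⟨L k + r, by omega, he1, rfl⟩
    have hle := csInf_le (Aset_bddBelow (s := s) (N k)) hmem
    rw [he2] at hle
    unfold iof
    linarith
  have he_pos : ∀ k, 0 < 1 - fr s (L k) := by
    intro k
    have := fr_lt_one hb hap (hLpos k)
    linarith
  have hio_sum : ∀ k, iof s (N 0) + ∑ i ∈ Finset.range k, (1 - fr s (L i)) ≤ iof s (N k) := by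
    intro k
    induction k with
    | zero => simp
    | succ k ih =>
      have h1 := hio_step k
      rw [Finset.sum_range_succ]
      linarith
  have hE_ge : ∀ k, 0 < k → 1 - fr s (L 0) ≤ ∑ i ∈ Finset.range k, (1 - fr s (L i)) := by
    intro k hk
    exact Finset.single_le_sum (f := fun i => 1 - fr s (L i))
      (fun i _ => (he_pos i).le) (Finset.mem_range.mpr hk)
  obtain ⟨x, hxA, hxlt⟩ := exists_lt_of_csInf_lt (hAne 0)
    (show sInf (Aset s (N 0)) < iof s (N 0) + (1 - fr s (L 0)) by
      have := he_pos 0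
      unfold iof
      linarith)
  obtain ⟨jst, hjst_pos, hjst_cnt, rfl⟩ := hxA
  rw [hN0] at hjst_cnt
  by_cases hbig : ∃ k, 0 < k ∧ jst ≤ L k
  · obtain ⟨k, hk, hkL⟩ := hbig
    have h1 := hio_sum k
    have h2 := hio_le k jst hjst_pos hkL hjst_cnt
    have h3 := hE_ge k hk
    linarith
  · push_neg at hbig
    rcases Nat.lt_or_ge jst 2 with hj2 | hj2
    · -- jst = 1 : impossible since L 1 ≥ 1
      have := hbig 1 Nat.one_pos
      have := hLpos 1
      omega
    · -- all L k < jst for k ≥ 1 : the increments are bounded below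
      have hne' : ((Finset.Ico 1 jst).image (fun j => 1 - fr s j)).Nonempty := by
        apply Finset.image_nonempty.mpr
        rw [Finset.nonempty_Ico]
        omega
      set dl : ℝ := ((Finset.Ico 1 jst).image (fun j => 1 - fr s j)).min' hne' with hdl
      have hdl_pos : 0 < dl := by
        have hmem := ((Finset.Ico 1 jst).image (fun j => 1 - fr s j)).min'_mem hne'
        rw [← hdl] at hmem
        obtain ⟨j0, hj0, hj0e⟩ := Finset.mem_image.mp hmem
        rw [Finset.mem_Ico] at hj0
        rw [← hj0e]
        have := fr_lt_one hb hap (show 0 < j0 by omega)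
        linarith
      have hdl_le : ∀ k, 0 < k → dl ≤ 1 - fr s (L k) := by
        intro k hk
        apply Finset.min'_le
        apply Finset.mem_image.mpr
        exact ⟨L k, Finset.mem_Ico.mpr ⟨hLpos k, hbig k hk⟩, rfl⟩
      have hEk : ∀ k : ℕ, (1 - fr s (L 0)) + k * dl ≤
          ∑ i ∈ Finset.range (k + 1), (1 - fr s (L i)) := by
        intro k
        induction k with
        | zero => simp
        | succ k ih =>
          rw [Finset.sum_range_succ]
          have := hdl_le (k + 1) (Nat.succ_pos k)
          push_cast
          push_cast at ih
          linarith
      obtain ⟨k, hkgt⟩ := exists_nat_gt (1 / dl)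
      have hk1 : (1:ℝ) < k * dl := (div_lt_iff₀ hdl_pos).mp hkgt
      have h1 := hEk k
      have h2 := hio_sum (k + 1)
      have h3 := hio_le (k + 1) (L (k + 1)) (hLpos (k + 1)) le_rfl (hrich0 (k + 1))
      have h4 : fr s (L (k + 1)) < 1 := fr_lt_one hb hap (hLpos (k + 1))
      have h5 := hio_nonneg 0
      have h6 := he_pos 0
      linarith

end Key


section Neg

/-- letter-swapped word -/
def negw (s : ℕ → Bool) : ℕ → Bool := fun n => ! s n

lemma win_neg (s : ℕ → Bool) (q n : ℕ) : win (negw s) q n = (win s q n).map Bool.not := by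
  unfold win negw
  rw [List.map_map]
  rfl

lemma count_map_not (l : List Bool) (x : Bool) : (l.map Bool.not).count x = l.count (!x) := by
  have h := List.count_map_of_injective l Bool.not
    (fun a b hab => by cases a <;> cases b <;> simp_all) (!x)
  simpa using h

lemma factor_neg {s : ℕ → Bool} {u : List Bool} (h : FactorOf s u) :
    FactorOf (negw s) (u.map Bool.not) := by
  obtain ⟨q, hq⟩ := factor_eq_win h
  refine ⟨q, ?_⟩
  have : u.map Bool.not = win (negw s) q ((u.map Bool.not).length) := by
    rw [List.length_map, win_neg, ← hq]
  exact this

lemma prefix_neg {s : ℕ → Bool} {u : List Bool} (h : PrefixOf s u) :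
    PrefixOf (negw s) (u.map Bool.not) := by
  rw [prefix_iff] at h ⊢
  rw [List.length_map, win_neg, ← h]

lemma sturmian_neg {s : ℕ → Bool} (hs : Sturmian s) : Sturmian (negw s) := by
  obtain ⟨hap, hb⟩ := hs
  constructor
  · rintro ⟨p, hp, N, h⟩
    exact hap ⟨p, hp, N, fun n hn => by
      have := h n hn
      unfold negw at this
      cases h1 : s (n + p) <;> cases h2 : s n <;> simp_all⟩
  · intro u v hu hv hlen x
    obtain ⟨qu, hqu⟩ := factor_eq_win hu
    obtain ⟨qv, hqv⟩ := factor_eq_win hv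
    have hu' : u.count x = (win s qu u.length).count (!x) := by
      conv_lhs => rw [hqu, win_neg, count_map_not]
    have hv' : v.count x = (win s qv v.length).count (!x) := by
      conv_lhs => rw [hqv, win_neg, count_map_not]
    rw [hu', hv', hlen]
    exact hb _ _ (factor_win s qu v.length) (factor_win s qv v.length) (by simp) (!x)

lemma fact_neg {s : ℕ → Bool} {U : ℕ → List Bool} (h : Factorization s U) :
    Factorization (negw s) (fun i => (U i).map Bool.not) := by
  constructor
  · intro i
    exact fun h' => h.1 i (List.map_eq_nil_iff.mp h')
  · intro n
    have hje : ((List.range n).map fun i => (U i).map Bool.not).flatten =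
        (((List.range n).map U).flatten).map Bool.not := by
      rw [show ((List.range n).map fun i => (U i).map Bool.not) =
        (((List.range n).map U).map (List.map Bool.not)) by rw [List.map_map]; rfl]
      exact List.map_flatten (f := Bool.not) (L := (List.range n).map U) |>.symm ▸ rfl
    rw [hje]
    exact prefix_neg (h.2 n)

lemma rich_neg {s : ℕ → Bool} {u : List Bool} (h : RichIn s u false) :
    RichIn (negw s) (u.map Bool.not) true := by
  obtain ⟨v, hvf, hvl, hvlt⟩ := h
  refine ⟨v.map Bool.not, factor_neg hvf, by simp [hvl], ?_⟩
  rw [count_map_not, count_map_not]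
  simpa using hvlt

lemma count_false_add_count_true (l : List Bool) : l.count false + l.count true = l.length := by
  induction l with
  | nil => simp
  | cons a l ih => cases a <;> simp [List.count_cons] <;> omega

lemma dicho {s : ℕ → Bool} (hb : BalancedW s) (hap : ¬ EventuallyPeriodic s)
    {u : List Bool} (hu : PrefixOf s u) (hune : u ≠ []) (hnr : ¬ RichIn s u true) :
    RichIn s u false := by
  set n := u.length with hn_def
  have hn : 0 < n := List.length_pos_iff.mpr hune
  have hupre : u = win s 0 n := prefix_iff.mp hu
  have hcu_t : u.count true = cnt s 0 n := by rw [hupre]; rfl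
  have hall : ∀ q, cnt s 0 n ≤ cnt s q n := by
    intro q
    by_contra hlt
    push_neg at hlt
    exact hnr ⟨win s q n, factor_win s q n, by rw [hupre]; simp, by rw [hcu_t]; exact hlt⟩
  obtain ⟨i, hi⟩ := exists_neq hap hn
  have e1 : cnt s i (n + 1) = cnt s i n + (if s (i + n) then 1 else 0) := cnt_succ_split i n
  have e2 : cnt s i (n + 1) = (if s i then 1 else 0) + cnt s (i + 1) n := by
    have := cnt_split_one (s := s) i n
    rwa [Nat.add_comm 1 n] at this
  have hne2 : cnt s i n ≠ cnt s (i + 1) n := by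
    intro he
    cases h1 : s i <;> cases h2 : s (i + n) <;> simp [h1, h2] at e1 e2 <;>
      first
        | exact hi (h1.trans h2.symm)
        | omega
  have hfalse : ∀ q, (win s q n).count false = n - cnt s q n := by
    intro q
    have := count_false_add_count_true (win s q n)
    rw [win_length] at this
    unfold cnt at *
    omega
  have hculen : u.count false = n - cnt s 0 n := by rw [hupre]; exact hfalse 0
  rcases Nat.lt_or_ge (cnt s i n) (cnt s (i + 1) n) with hlt | hge
  · refine ⟨win s (i + 1) n, factor_win s (i + 1) n, by rw [hupre]; simp, ?_⟩
    rw [hculen, hfalse (i + 1)]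
    have h1 := hall i
    have h2 := cnt_le s (i + 1) n
    omega
  · refine ⟨win s i n, factor_win s i n, by rw [hupre]; simp, ?_⟩
    rw [hculen, hfalse i]
    have h1 := hall (i + 1)
    have h2 := cnt_le s i n
    omega

end Neg

end Stmt17


/-- A 3-coloring of factors of a Sturmian word avoiding monochromatic factorizations. -/
theorem stmt_17 (s : ℕ → Bool) (hs : Sturmian s) :
    ∃ c : List Bool → Fin 3, ∀ U : ℕ → List Bool, Factorization s U →
      ∃ i j : ℕ, c (U i) ≠ c (U j) := open Stmt17 in by
  classical
  refine ⟨fun u => if PrefixOf s u then (if RichIn s u true then 1 else 0) else 2, ?_⟩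
  intro U hU
  by_contra hcon
  push_neg at hcon
  have hc0 : ∀ i, (if PrefixOf s (U i) then (if RichIn s (U i) true then (1:Fin 3) else 0) else 2)
      = (if PrefixOf s (U 0) then (if RichIn s (U 0) true then (1:Fin 3) else 0) else 2) :=
    fun i => hcon i 0
  have hU0pre : PrefixOf s (U 0) := by
    have h := hU.2 1
    have he : ((List.range 1).map U).flatten = U 0 := by
      have : List.range 1 = [0] := rfl
      rw [this]
      simp
    rwa [he] at h
  by_cases hrich : RichIn s (U 0) true
  · have hpre : ∀ i, PrefixOf s (U i) := by
      intro i
      have h := hc0 i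
      rw [if_pos hU0pre, if_pos hrich] at h
      by_contra hnp
      rw [if_neg hnp] at h
      exact absurd h (by decide)
    have hrichall : ∀ i, RichIn s (U i) true := by
      intro i
      have h := hc0 i
      rw [if_pos hU0pre, if_pos hrich, if_pos (hpre i)] at h
      by_contra hnr
      rw [if_neg hnr] at h
      exact absurd h (by decide)
    exact (key s hs U hU hpre hrichall).elim
  · have hpre : ∀ i, PrefixOf s (U i) := by
      intro i
      have h := hc0 i
      rw [if_pos hU0pre, if_neg hrich] at h
      by_contra hnp
      rw [if_neg hnp] at h
      exact absurd h (by decide)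
    have hnrich : ∀ i, ¬ RichIn s (U i) true := by
      intro i
      have h := hc0 i
      rw [if_pos hU0pre, if_neg hrich, if_pos (hpre i)] at h
      by_contra hnr
      rw [if_pos hnr] at h
      exact absurd h (by decide)
    have hrichf : ∀ i, RichIn s (U i) false :=
      fun i => dicho hs.2 hs.1 (hpre i) (hU.1 i) (hnrich i)
    exact (key (negw s) (sturmian_neg hs) (fun i => (U i).map Bool.not)
      (fact_neg hU) (fun i => prefix_neg (hpre i)) (fun i => rich_neg (hrichf i))).elim
end
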